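/- The merge operator on local types is associative: for all local types T1, T2, T3, if (T1 ⊔ T2) ⊔ T3 is defined then T1 ⊔ (T2 ⊔ T3) is defined and the two are equal (and symmetrically). -/

import Mathlib

/-- Local types T ::= end | base B | p?{lᵢ⟨Uᵢ⟩.Tᵢ} | p!{lᵢ⟨Uᵢ⟩.Tᵢ} | ∀α.T | ∃α.T | @_ω T | ↓α.T.
Payload types U (base types or local types) are embedded into local types via `base`.
Branchings/selections are represented as functions from labels to optional
(payload, continuation) pairs, which makes the pairwise-distinctness of labels implicit. -/
inductive LocalTy where
  | endT : LocalTy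
  | base : String → LocalTy
  | recv : String → (String → Option (LocalTy × LocalTy)) → LocalTy
  | send : String → (String → Option (LocalTy × LocalTy)) → LocalTy
  | all  : String → LocalTy → LocalTy
  | ex   : String → LocalTy → LocalTy
  | att  : String → LocalTy → LocalTy
  | here : String → LocalTy → LocalTy

mutual
/-- The partial merge operator: `Merge T1 T2 T` means T1 ⊔ T2 is defined and equals T.
B ⊔ B = B for base types; T ⊔ T = T for end, selection, @, ∀, ∃ types; branching types
from the same participant merge by taking the union of branches, recursively merging
payloads and continuations on common labels; undefined otherwise. -/
inductive Merge : LocalTy → LocalTy → LocalTy → Prop where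
  | endT : Merge .endT .endT .endT
  | base (b : String) : Merge (.base b) (.base b) (.base b)
  | send (p : String) (f : String → Option (LocalTy × LocalTy)) :
      Merge (.send p f) (.send p f) (.send p f)
  | all (a : String) (T : LocalTy) : Merge (.all a T) (.all a T) (.all a T)
  | ex (a : String) (T : LocalTy) : Merge (.ex a T) (.ex a T) (.ex a T)
  | att (w : String) (T : LocalTy) : Merge (.att w T) (.att w T) (.att w T)
  | recv (p : String) (f g h : String → Option (LocalTy × LocalTy)) :
      (∀ l, MergeO (f l) (g l) (h l)) → Merge (.recv p f) (.recv p g) (.recv p h)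

/-- Merge of optional branches: a label present on only one side is kept as is;
a common label merges payloads and continuations. -/
inductive MergeO : Option (LocalTy × LocalTy) → Option (LocalTy × LocalTy) →
    Option (LocalTy × LocalTy) → Prop where
  | none : MergeO none none none
  | left (b : LocalTy × LocalTy) : MergeO (some b) none (some b)
  | right (b : LocalTy × LocalTy) : MergeO none (some b) (some b)
  | both {U1 T1 U2 T2 U T : LocalTy} :
      Merge U1 U2 U → Merge T1 T2 T →
      MergeO (some (U1, T1)) (some (U2, T2)) (some (U, T))
end

/-! The rules for `end`, base, selection, `∀`, `∃` and `@` types only merge a type with itself,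
so they are trivially associative. Branching types merge labelwise, and on each label the merge
of optional branches is a union that recurses into common labels; associativity then follows by
mutual induction on the derivation of `T1 ⊔ T2`. The converse direction reduces to this one by
commutativity of the merge. -/

mutual
theorem Merge.symm {T1 T2 T : LocalTy} : Merge T1 T2 T → Merge T2 T1 T
  | .endT => .endT
  | .base b => .base b
  | .send p f => .send p f
  | .all a T => .all a T
  | .ex a T => .ex a T
  | .att w T => .att w T
  | .recv p f g h hfg => .recv p g f h fun l => (hfg l).symm

theorem MergeO.symm {o1 o2 o : Option (LocalTy × LocalTy)} : MergeO o1 o2 o → MergeO o2 o1 o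
  | .none => .none
  | .left b => .right b
  | .right b => .left b
  | .both hU hT => .both hU.symm hT.symm
end

mutual
theorem Merge.assoc {T1 T2 T12 T3 T : LocalTy} :
    Merge T1 T2 T12 → Merge T12 T3 T → ∃ T23, Merge T2 T3 T23 ∧ Merge T1 T23 T
  | .endT, .endT => ⟨_, .endT, .endT⟩
  | .base b, .base _ => ⟨_, .base b, .base b⟩
  | .send p f, .send _ _ => ⟨_, .send p f, .send p f⟩
  | .all a T, .all _ _ => ⟨_, .all a T, .all a T⟩
  | .ex a T, .ex _ _ => ⟨_, .ex a T, .ex a T⟩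
  | .att w T, .att _ _ => ⟨_, .att w T, .att w T⟩
  | .recv p f g _ h12, .recv _ _ f3 h h123 => by
    choose f23 h23 h1_23 using fun l => MergeO.assoc (h12 l) (h123 l)
    exact ⟨_, .recv p g f3 f23 h23, .recv p f f23 h h1_23⟩

theorem MergeO.assoc {o1 o2 o12 o3 o : Option (LocalTy × LocalTy)} :
    MergeO o1 o2 o12 → MergeO o12 o3 o → ∃ o23, MergeO o2 o3 o23 ∧ MergeO o1 o23 o
  | .none, .none => ⟨_, .none, .none⟩
  | .none, .right b => ⟨_, .right b, .right b⟩
  | .left b, .left _ => ⟨_, .none, .left b⟩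
  | .left _, .both hU hT => ⟨_, .right _, .both hU hT⟩
  | .right b, .left _ => ⟨_, .left b, .right _⟩
  | .right _, .both hU hT => ⟨_, .both hU hT, .right _⟩
  | .both hU hT, .left _ => ⟨_, .left _, .both hU hT⟩
  | .both hU12 hT12, .both hU hT =>
    have ⟨_, hU23, hU1_23⟩ := hU12.assoc hU
    have ⟨_, hT23, hT1_23⟩ := hT12.assoc hT
    ⟨_, .both hU23 hT23, .both hU1_23 hT1_23⟩
end

theorem Merge.assoc' {T1 T2 T3 T23 T : LocalTy} (h23 : Merge T2 T3 T23)
    (h : Merge T1 T23 T) :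
    ∃ T12, Merge T1 T2 T12 ∧ Merge T12 T3 T :=
  have ⟨T12, h21, h3_12⟩ := h23.symm.assoc h.symm
  ⟨T12, h21.symm, h3_12.symm⟩

/-- the merge operator is associative: if (T1 ⊔ T2) ⊔ T3 is defined
then T1 ⊔ (T2 ⊔ T3) is defined and the two are equal, and symmetrically. -/
theorem merge_assoc (T1 T2 T3 : LocalTy) :
    (∀ T12 T, Merge T1 T2 T12 → Merge T12 T3 T →
      ∃ T23, Merge T2 T3 T23 ∧ Merge T1 T23 T) ∧
    (∀ T23 T, Merge T2 T3 T23 → Merge T1 T23 T →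
      ∃ T12, Merge T1 T2 T12 ∧ Merge T12 T3 T) :=
  ⟨fun _ _ => Merge.assoc, fun _ _ => Merge.assoc'⟩
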